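/- Let p ≥ 1 and let (X, d, m) be a metric measure space whose measure m is β-doubling for some β > 1, with N = log β / log 2, and assume θ_N^+(x) ≤ b for all x ∈ X for some b > 0. Let 0 < N̄ < N. Then for every Lipschitz function u : X → ℝ with bounded support, lim_{λ→+∞} λ^p · (m × m)(Ē_{λ,u}) = 0, where Ē_{λ,u} = {(x,y) ∈ X × X : x ≠ y, |u(x) − u(y)| ≥ λ · d(x,y)^{N̄/p + 1}}. -/

import Mathlib

open MeasureTheory Filter Metric Set Topology

/-- The lower pointwise Lipschitz constant
`lip u (x) = liminf_{r → 0+} sup_{y ∈ B_r(x)} |u y - u x| / r`. -/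
noncomputable def lipLower {X : Type*} [MetricSpace X] (u : X → ℝ) (x : X) : ℝ :=
  Filter.liminf (fun r : ℝ => ⨆ y ∈ Metric.ball x r, |u y - u x| / r) (𝓝[>] (0 : ℝ))

/-- The upper pointwise Lipschitz constant
`Lip u (x) = limsup_{r → 0+} sup_{y ∈ B_r(x)} |u y - u x| / r`. -/
noncomputable def lipUpper {X : Type*} [MetricSpace X] (u : X → ℝ) (x : X) : ℝ :=
  Filter.limsup (fun r : ℝ => ⨆ y ∈ Metric.ball x r, |u y - u x| / r) (𝓝[>] (0 : ℝ))

/-- The set `E_{λ,u} = {(x,y) : x ≠ y, |u x - u y| ≥ λ d(x,y)^{N/p+1}}`. -/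
def BVYset {X : Type*} [MetricSpace X] (u : X → ℝ) (N p lam : ℝ) : Set (X × X) :=
  {q : X × X | q.1 ≠ q.2 ∧ lam * dist q.1 q.2 ^ (N / p + 1) ≤ |u q.1 - u q.2|}

/-! With `β = 2 ^ N`, doubling says that the ratio `μ (B_r x) / r ^ N` cannot increase when `r`
doubles, so the density bound at small scales gives `μ (B_r x) ≤ c r ^ N` at every scale.
A pair in `Ē_λ` satisfies `λ d ^ (N̄/p) ≤ L`, so `d ≤ R := (L/λ) ^ (p/N̄)`, and its first point lies
within `R` of the support of `u`. Fubini bounds `(μ × μ)(Ē_λ)` by `c (2R) ^ N μ T` for a fixed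
bounded `T`, and `λ ^ p R ^ N = L ^ (pN/N̄) λ ^ (p - pN/N̄) → 0` because `N̄ < N`. -/

open scoped ENNReal NNReal

section Doubling

variable {X : Type*} [MetricSpace X] [MeasurableSpace X] (μ : Measure X)

lemma measure_ball_le_pow_mul_measure_ball_div {β : ℝ}
    (hdbl : ∀ (x : X) (r : ℝ), 0 < r → μ (ball x (2 * r)) ≤ ENNReal.ofReal β * μ (ball x r))
    (x : X) {r : ℝ} (hr : 0 < r) (k : ℕ) :
    μ (ball x r) ≤ ENNReal.ofReal β ^ k * μ (ball x (r / 2 ^ k)) := by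
  induction k with
  | zero => simp
  | succ k ih =>
    calc μ (ball x r) ≤ ENNReal.ofReal β ^ k * μ (ball x (r / 2 ^ k)) := ih
      _ ≤ ENNReal.ofReal β ^ k * (ENNReal.ofReal β * μ (ball x (r / 2 ^ (k + 1)))) := by
        have hhalf : 2 * (r / 2 ^ (k + 1)) = r / 2 ^ k := by
          rw [pow_succ]
          field_simp
        gcongr
        exact hhalf ▸ hdbl x (r / 2 ^ (k + 1)) (by positivity)
      _ = ENNReal.ofReal β ^ (k + 1) * μ (ball x (r / 2 ^ (k + 1))) := by ring

lemma measure_ball_le_of_limsup_lt {β N : ℝ} (h2N : (2 : ℝ) ^ N = β)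
    (hdbl : ∀ (x : X) (r : ℝ), 0 < r → μ (ball x (2 * r)) ≤ ENNReal.ofReal β * μ (ball x r))
    {x : X} {c : ℝ≥0∞}
    (hθ : limsup (fun r : ℝ => μ (ball x r) / ENNReal.ofReal (r ^ N)) (𝓝[>] 0) < c)
    {r : ℝ} (hr : 0 < r) :
    μ (ball x r) ≤ c * ENNReal.ofReal (r ^ N) := by
  have hscales : Tendsto (fun k : ℕ => r / 2 ^ k) atTop (𝓝[>] 0) :=
    tendsto_nhdsWithin_iff.2 ⟨tendsto_const_nhds.div_atTop
      (tendsto_pow_atTop_atTop_of_one_lt one_lt_two), .of_forall fun k => mem_Ioi.2 (by positivity)⟩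
  obtain ⟨k, hk⟩ := (hscales.eventually (eventually_lt_of_limsup_lt hθ)).exists
  set s := r / 2 ^ k with hs_def
  have hs : 0 < s := by positivity
  have hβ : 0 ≤ β := h2N ▸ by positivity
  have hscale : β ^ k * s ^ N = r ^ N := by
    calc β ^ k * s ^ N = ((2 : ℝ) ^ k) ^ N * s ^ N := by
          rw [← h2N, ← Real.rpow_natCast, ← Real.rpow_natCast, ← Real.rpow_mul zero_le_two,
            ← Real.rpow_mul zero_le_two, mul_comm (k : ℝ)]
      _ = r ^ N := by
          rw [← Real.mul_rpow (by positivity) hs.le, hs_def, mul_div_cancel₀ _ (by positivity)]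
  have hsmall : μ (ball x s) ≤ c * ENNReal.ofReal (s ^ N) :=
    (ENNReal.div_le_iff (by simpa using Real.rpow_pos_of_pos hs N) ENNReal.ofReal_ne_top).1 hk.le
  calc μ (ball x r) ≤ ENNReal.ofReal β ^ k * μ (ball x s) :=
        measure_ball_le_pow_mul_measure_ball_div μ hdbl x hr k
    _ ≤ ENNReal.ofReal β ^ k * (c * ENNReal.ofReal (s ^ N)) := by gcongr
    _ = c * ENNReal.ofReal (β ^ k * s ^ N) := by
        rw [ENNReal.ofReal_mul (pow_nonneg hβ k), ENNReal.ofReal_pow hβ]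
        ring
    _ = c * ENNReal.ofReal (r ^ N) := by rw [hscale]

lemma measure_lt_top_of_isBounded {N : ℝ} {c : ℝ≥0∞} (hc : c ≠ ∞)
    (hball : ∀ (x : X) (r : ℝ), 0 < r → μ (ball x r) ≤ c * ENNReal.ofReal (r ^ N))
    {s : Set X} (hs : Bornology.IsBounded s) : μ s < ∞ := by
  rcases s.eq_empty_or_nonempty with rfl | ⟨x, -⟩
  · simp
  obtain ⟨r, hr, hsr⟩ := hs.subset_ball_lt 0 x
  exact (measure_mono hsr).trans_lt <|
    (hball x r hr).trans_lt (ENNReal.mul_lt_top hc.lt_top ENNReal.ofReal_lt_top)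

end Doubling

section ExceptionalSet

variable {X : Type*} [MetricSpace X]

lemma BVYset_subset {u : X → ℝ} {L : ℝ≥0} (hu : LipschitzWith L u) {s p lam : ℝ}
    (hs : 0 < s) (hp : 0 < p) (hlam : 0 < lam) :
    BVYset u s p lam ⊆ {q | q.1 ∈ cthickening ((L / lam) ^ (p / s)) (Function.support u) ∧
      dist q.1 q.2 ≤ (L / lam) ^ (p / s)} := by
  rintro ⟨x, y⟩ ⟨hne, hxy⟩
  have hd : 0 < dist x y := dist_pos.2 hne
  have hpow : dist x y ^ (s / p) ≤ L / lam := by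
    have hlip : lam * dist x y ^ (s / p) * dist x y ≤ L * dist x y := by
      rw [mul_assoc, ← Real.rpow_add_one hd.ne']
      simpa only [Real.dist_eq] using hxy.trans (hu.dist_le_mul x y)
    rw [le_div_iff₀ hlam, mul_comm]
    exact le_of_mul_le_mul_right hlip hd
  have hdist : dist x y ≤ (L / lam) ^ (p / s) :=
    calc dist x y = (dist x y ^ (s / p)) ^ (p / s) := by
          rw [← Real.rpow_mul hd.le, show s / p * (p / s) = 1 by field_simp, Real.rpow_one]
      _ ≤ (L / lam) ^ (p / s) := by gcongr
  refine ⟨?_, hdist⟩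
  have hux : u x ≠ u y := by
    intro h
    have : 0 < lam * dist x y ^ (s / p + 1) := by positivity
    rw [h, sub_self, abs_zero] at hxy
    linarith
  by_cases hx : u x = 0
  · exact mem_cthickening_of_dist_le x y _ _ (hx ▸ hux).symm hdist
  · exact self_subset_cthickening _ hx

variable [MeasurableSpace X] [OpensMeasurableSpace X] [SecondCountableTopology X]

lemma prod_measure_le_of_measure_closedBall_le {μ : Measure X} [SFinite μ] {T : Set X}
    (hT : MeasurableSet T) {r : ℝ} {κ : ℝ≥0∞} (hκ : ∀ x ∈ T, μ (closedBall x r) ≤ κ) :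
    μ.prod μ {q | q.1 ∈ T ∧ dist q.1 q.2 ≤ r} ≤ κ * μ T := by
  have hmeas : MeasurableSet {q : X × X | q.1 ∈ T ∧ dist q.1 q.2 ≤ r} :=
    (measurable_fst hT).inter
      (measurableSet_le (measurable_fst.dist measurable_snd) measurable_const)
  rw [Measure.prod_apply hmeas, ← lintegral_indicator_const hT]
  refine lintegral_mono fun x => ?_
  by_cases hx : x ∈ T
  · rw [indicator_of_mem hx]
    refine (measure_mono fun y hy => ?_).trans (hκ x hx)
    simpa [dist_comm] using hy.2
  · simp [hx]

lemma prod_measure_BVYset_le {μ : Measure X} [SFinite μ] {N : ℝ} {c : ℝ≥0∞}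
    (hball : ∀ (x : X) (r : ℝ), 0 < r → μ (ball x r) ≤ c * ENNReal.ofReal (r ^ N))
    {u : X → ℝ} {L : ℝ≥0} (hu : LipschitzWith L u) (hL : 0 < L) {s p lam : ℝ}
    (hs : 0 < s) (hp : 0 < p) (hlam : L ≤ lam) :
    μ.prod μ (BVYset u s p lam) ≤ c * ENNReal.ofReal (2 ^ N * (L / lam) ^ (p / s * N)) *
      μ (cthickening 1 (Function.support u)) := by
  have hlam0 : 0 < lam := (NNReal.coe_pos.2 hL).trans_le hlam
  set R := ((L : ℝ) / lam) ^ (p / s) with hR_def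
  have hR : 0 < R := by positivity
  have hR1 : R ≤ 1 := Real.rpow_le_one (by positivity) ((div_le_one hlam0).2 hlam) (by positivity)
  calc μ.prod μ (BVYset u s p lam)
      ≤ μ.prod μ {q | q.1 ∈ cthickening 1 (Function.support u) ∧ dist q.1 q.2 ≤ R} :=
        measure_mono fun q hq =>
          (BVYset_subset hu hs hp hlam0 hq).imp_left (cthickening_mono hR1 _ ·)
    _ ≤ c * ENNReal.ofReal ((2 * R) ^ N) * μ (cthickening 1 (Function.support u)) :=
        prod_measure_le_of_measure_closedBall_le isClosed_cthickening.measurableSet fun x _ =>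
          (measure_mono (closedBall_subset_ball (by linarith))).trans (hball x _ (by positivity))
    _ = c * ENNReal.ofReal (2 ^ N * (L / lam) ^ (p / s * N)) *
          μ (cthickening 1 (Function.support u)) := by
        rw [Real.mul_rpow zero_le_two hR.le, hR_def, ← Real.rpow_mul (by positivity)]

end ExceptionalSet

lemma tendsto_rpow_mul_div_rpow_atTop {p q L : ℝ} (hpq : p < q) (hL : 0 ≤ L) :
    Tendsto (fun lam : ℝ => lam ^ p * (L / lam) ^ q) atTop (𝓝 0) := by
  have hdecay : Tendsto (fun lam : ℝ => L ^ q * lam ^ (-(q - p))) atTop (𝓝 0) := by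
    simpa using (tendsto_rpow_neg_atTop (sub_pos.2 hpq)).const_mul (L ^ q)
  refine hdecay.congr' ?_
  filter_upwards [eventually_gt_atTop 0] with lam hlam
  rw [Real.div_rpow hL hlam.le, neg_sub, Real.rpow_sub hlam]
  field_simp

theorem tendsto_zero_of_exponent_lt_general
    {X : Type*} [MetricSpace X] [TopologicalSpace.SeparableSpace X]
    [MeasurableSpace X] [BorelSpace X]
    (μ : Measure X) [SigmaFinite μ]
    (p β : ℝ) (hp : 1 ≤ p) (hβ : 1 < β)
    (hdbl : ∀ (x : X) (r : ℝ), 0 < r →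
      μ (Metric.ball x (2 * r)) ≤ ENNReal.ofReal β * μ (Metric.ball x r))
    (N : ℝ) (hN : N = Real.log β / Real.log 2)
    (b : ℝ)
    (hθ : ∀ x : X,
      Filter.limsup (fun r : ℝ => μ (Metric.ball x r) / ENNReal.ofReal (r ^ N)) (𝓝[>] (0 : ℝ))
        ≤ ENNReal.ofReal b)
    (Nbar : ℝ) (hNbar0 : 0 < Nbar) (hNbarN : Nbar < N)
    (u : X → ℝ) (hu : ∃ L : NNReal, LipschitzWith L u)
    (hsupp : Bornology.IsBounded (Function.support u)) :
    Filter.Tendsto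
      (fun lam : ℝ => ENNReal.ofReal (lam ^ p) * (μ.prod μ) (BVYset u Nbar p lam))
      Filter.atTop (nhds 0) := by
  obtain ⟨L₀, hL₀⟩ := hu
  -- a positive constant keeps the scale `(L / λ) ^ (p / N̄)` positive
  set L : ℝ≥0 := L₀ + 1
  have hLip : LipschitzWith L u := hL₀.weaken le_self_add
  set c : ℝ≥0∞ := ENNReal.ofReal b + 1
  have hball : ∀ (x : X) (r : ℝ), 0 < r → μ (ball x r) ≤ c * ENNReal.ofReal (r ^ N) :=
    fun x r hr => measure_ball_le_of_limsup_lt μ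
      (hN ▸ Real.rpow_logb two_pos (by norm_num) (by linarith)) hdbl
      ((hθ x).trans_lt (ENNReal.lt_add_right ENNReal.ofReal_ne_top one_ne_zero)) hr
  set T := cthickening 1 (Function.support u)
  have hT : c * μ T ≠ ∞ := ENNReal.mul_ne_top (by simp [c])
    (measure_lt_top_of_isBounded μ (by simp [c]) hball hsupp.cthickening).ne
  have hexp : p < p / Nbar * N := by
    rw [div_mul_eq_mul_div, lt_div_iff₀ hNbar0]
    nlinarith
  have hlim : Tendsto (fun lam : ℝ =>
      ENNReal.ofReal (2 ^ N * (lam ^ p * (L / lam) ^ (p / Nbar * N))) * (c * μ T)) atTop (𝓝 0) := by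
    simpa using ENNReal.Tendsto.mul_const (ENNReal.tendsto_ofReal
      ((tendsto_rpow_mul_div_rpow_atTop hexp L.coe_nonneg).const_mul (2 ^ N))) (.inr hT)
  refine tendsto_of_tendsto_of_tendsto_of_le_of_le' tendsto_const_nhds hlim
    (.of_forall fun _ => zero_le) ?_
  filter_upwards [eventually_ge_atTop (L : ℝ)] with lam hlam
  calc ENNReal.ofReal (lam ^ p) * (μ.prod μ) (BVYset u Nbar p lam)
      ≤ ENNReal.ofReal (lam ^ p) *
          (c * ENNReal.ofReal (2 ^ N * (L / lam) ^ (p / Nbar * N)) * μ T) := by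
        gcongr
        exact prod_measure_BVYset_le hball hLip (by positivity) hNbar0 (by linarith) hlam
    _ = ENNReal.ofReal (2 ^ N * (lam ^ p * (L / lam) ^ (p / Nbar * N))) * (c * μ T) := by
        rw [ENNReal.ofReal_mul (by positivity), ENNReal.ofReal_mul (by positivity),
          ENNReal.ofReal_mul (Real.rpow_nonneg (L.coe_nonneg.trans hlam) p)]
        ring

theorem tendsto_zero_of_exponent_lt
    {X : Type*} [MetricSpace X] [CompleteSpace X] [TopologicalSpace.SeparableSpace X]
    [MeasurableSpace X] [BorelSpace X]
    (μ : Measure X) [SigmaFinite μ] [IsLocallyFiniteMeasure μ] [μ.InnerRegular]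
    [μ.IsOpenPosMeasure]
    (p β : ℝ) (hp : 1 ≤ p) (hβ : 1 < β)
    (hdbl : ∀ (x : X) (r : ℝ), 0 < r →
      μ (Metric.ball x (2 * r)) ≤ ENNReal.ofReal β * μ (Metric.ball x r))
    (N : ℝ) (hN : N = Real.log β / Real.log 2)
    (b : ℝ) (hb : 0 < b)
    (hθ : ∀ x : X,
      Filter.limsup (fun r : ℝ => μ (Metric.ball x r) / ENNReal.ofReal (r ^ N)) (𝓝[>] (0 : ℝ))
        ≤ ENNReal.ofReal b)
    (Nbar : ℝ) (hNbar0 : 0 < Nbar) (hNbarN : Nbar < N)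
    (u : X → ℝ) (hu : ∃ L : NNReal, LipschitzWith L u)
    (hsupp : Bornology.IsBounded (Function.support u)) :
    Filter.Tendsto
      (fun lam : ℝ => ENNReal.ofReal (lam ^ p) * (μ.prod μ) (BVYset u Nbar p lam))
      Filter.atTop (nhds 0) :=
  tendsto_zero_of_exponent_lt_general μ p β hp hβ hdbl N hN b hθ Nbar hNbar0 hNbarN u hu hsupp
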